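/- Define polynomials A_n(x;q) ∈ ℝ[x] by A_0(x;q) = 1 and A_{n+1}(x;q) = (nx+q)·A_n(x;q) − x(x−1)·(d/dx)A_n(x;q). Then for all n, m ∈ ℕ, the polynomial A_n(x;−m) has only real zeros (or is identically zero). -/

import Mathlib

/-
Clearing denominators, `(X - 1)^m A_n(x;-m) = P_n (X - 1)^n`, where `P_0 = (X - 1)^m` and
`P_{n+1} = m P_n - X P_n'`; explicitly `P_n = ∑ᵢ (-1)^i C(m,i) i^n X^(m-i)`. The reflection
`X^m P_n(1/X)` is `θ^n (1 - X)^m` with `θ = X d/dX`, and `θ` preserves real-rootedness by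
Rolle's theorem, as does reflection. Hence `P_n`, and with it its divisor `A_n(x;-m)` of
`P_n (X - 1)^n`, has only real zeros.
-/

open Polynomial

/-- All complex zeros of `f` are real (holds trivially for `f = 0`). -/
def AllRootsReal (f : Polynomial ℝ) : Prop := f.roots.card = f.natDegree

/-- `f` is real-rooted: nonzero and all of its complex zeros are real. -/
def RealRooted (f : Polynomial ℝ) : Prop := f ≠ 0 ∧ AllRootsReal f

/-- The q-Eulerian polynomials `A_n(x;q)`: `A_0 = 1` and
`A_{n+1}(x;q) = (nx+q) A_n(x;q) − x(x−1) A_n'(x;q)`. -/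
noncomputable def qEuler (q : ℝ) : ℕ → Polynomial ℝ
  | 0 => 1
  | n + 1 => (C (n : ℝ) * X + C q) * qEuler q n - X * (X - 1) * derivative (qEuler q n)

namespace Polynomial

section CommRing

variable {R : Type*} [CommRing R]

theorem coeff_X_mul_derivative (f : R[X]) (k : ℕ) :
    coeff (X * derivative f) k = k * coeff f k := by
  cases k with
  | zero => simp
  | succ k => rw [coeff_X_mul, coeff_derivative, mul_comm]; push_cast; rfl

theorem coeff_C_mul_sub_X_mul_derivative (N : ℕ) (f : R[X]) (k : ℕ) :
    coeff (C (N : R) * f - X * derivative f) k = (N - k) * coeff f k := by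
  rw [coeff_sub, coeff_C_mul, coeff_X_mul_derivative, sub_mul]

theorem reflect_C_mul_sub_X_mul_derivative {N : ℕ} {f : R[X]} (hf : f.natDegree ≤ N) :
    reflect N (C (N : R) * f - X * derivative f) = X * derivative (reflect N f) := by
  ext i
  rw [coeff_reflect, coeff_C_mul_sub_X_mul_derivative, coeff_X_mul_derivative, coeff_reflect]
  rcases le_or_gt i N with hi | hi
  · rw [revAt_le hi, Nat.cast_sub hi]
    ring
  · rw [revAt_eq_self_of_lt hi, coeff_eq_zero_of_natDegree_lt (hf.trans_lt hi)]
    ring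

end CommRing

theorem mul_derivative_pow {R : Type*} [CommSemiring R] (p : R[X]) (k : ℕ) :
    p * derivative (p ^ k) = C (k : R) * p ^ k * derivative p := by
  cases k with
  | zero => simp
  | succ k => rw [derivative_pow, Nat.add_sub_cancel, pow_succ]; ring

theorem Splits.reverse {K : Type*} [Field K] {f : K[X]} (hf : Splits f) : Splits f.reverse := by
  induction hf using Submonoid.closure_induction with
  | mem g hg =>
    rcases hg with ⟨a, rfl⟩ | ⟨a, rfl⟩
    · simp
    · exact .of_natDegree_le_one ((reverse_natDegree_le _).trans (natDegree_X_add_C a).le)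
  | one => rw [← C_1, reverse_C]; exact .C 1
  | mul f g _ _ hf hg => rw [reverse_mul_of_domain]; exact hf.mul hg

theorem Splits.reflect {K : Type*} [Field K] {f : K[X]} (hf : Splits f) {N : ℕ}
    (hN : f.natDegree ≤ N) : Splits (reflect N f) := by
  obtain ⟨k, rfl⟩ := Nat.exists_eq_add_of_le hN
  have hreverse := reflect_mul f 1 le_rfl (natDegree_one.trans_le (Nat.zero_le k))
  rw [mul_one, reflect_one] at hreverse
  rw [hreverse]
  exact hf.reverse.mul (.X_pow k)

theorem Splits.derivative_real {f : ℝ[X]} (hf : Splits f) : Splits (derivative f) := by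
  rw [splits_iff_card_roots] at hf ⊢
  have := card_roots_le_derivative f
  have := card_roots' (derivative f)
  have := natDegree_derivative_le f
  omega

end Polynomial

noncomputable def qEulerNumerator (m : ℕ) : ℕ → ℝ[X]
  | 0 => (X - 1) ^ m
  | n + 1 => C (m : ℝ) * qEulerNumerator m n - X * derivative (qEulerNumerator m n)

theorem natDegree_qEulerNumerator_le (m n : ℕ) : (qEulerNumerator m n).natDegree ≤ m := by
  induction n with
  | zero => rw [qEulerNumerator, ← C_1, natDegree_pow, natDegree_X_sub_C, mul_one]
  | succ n ih =>
    refine natDegree_le_iff_coeff_eq_zero.mpr fun k hk => ?_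
    rw [qEulerNumerator, coeff_C_mul_sub_X_mul_derivative,
      coeff_eq_zero_of_natDegree_lt (ih.trans_lt (by exact_mod_cast hk)), mul_zero]

theorem splits_reflect_qEulerNumerator (m n : ℕ) : Splits (reflect m (qEulerNumerator m n)) := by
  induction n with
  | zero =>
    rw [qEulerNumerator, ← C_1]
    exact ((Splits.X_sub_C 1).pow m).reflect (by rw [natDegree_pow, natDegree_X_sub_C, mul_one])
  | succ n ih =>
    rw [qEulerNumerator, reflect_C_mul_sub_X_mul_derivative (natDegree_qEulerNumerator_le m n)]
    exact Splits.X.mul ih.derivative_real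

theorem splits_qEulerNumerator (m n : ℕ) : Splits (qEulerNumerator m n) := by
  simpa using (splits_reflect_qEulerNumerator m n).reflect
    (natDegree_reflect_le.trans (max_le le_rfl (natDegree_qEulerNumerator_le m n)))

theorem X_sub_one_pow_mul_qEuler (m n : ℕ) :
    (X - 1) ^ m * qEuler (-(m : ℝ)) n = qEulerNumerator m n * (X - 1) ^ n := by
  induction n with
  | zero => simp [qEuler, qEulerNumerator]
  | succ n ih =>
    set E := qEuler (-(m : ℝ)) n
    set P := qEulerNumerator m n
    have hm := mul_derivative_pow (X - 1 : ℝ[X]) m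
    have hn := mul_derivative_pow (X - 1 : ℝ[X]) n
    have hd := congrArg (fun p => (X - 1) * derivative p) ih
    simp only [derivative_mul, derivative_sub, derivative_X, derivative_one, sub_zero,
      mul_one] at hm hn hd
    rw [qEuler, qEulerNumerator, map_neg]
    linear_combination (-X) * hd + X * E * hm - X * P * hn
      + (C (n : ℝ) * X - C (m : ℝ) + C (m : ℝ) * X) * ih

/-- Brenti's conjecture: for all `n, m ∈ ℕ`, the polynomial `A_n(x;−m)` has only real
zeros (or is identically zero). -/
theorem stmt15 (n m : ℕ) : AllRootsReal (qEuler (-(m : ℝ)) n) := by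
  have hsplits : Splits ((X - 1) ^ m * qEuler (-(m : ℝ)) n) := by
    rw [X_sub_one_pow_mul_qEuler]
    exact (splits_qEulerNumerator m n).mul (by simpa using (Splits.X_sub_C (1 : ℝ)).pow n)
  have hne : (X - 1 : ℝ[X]) ^ m ≠ 0 := pow_ne_zero m (by simpa using X_sub_C_ne_zero (1 : ℝ))
  exact splits_iff_card_roots.mp ((splits_mul'.mp hsplits).2.resolve_right hne)
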